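/- Corollary (pure Euler–Poincaré conservation): if $\xi(t)$ satisfies the pure Euler–Poincaré equation $\frac{d}{dt}\mu(t) = \mathrm{ad}^*_{\xi(t)}\mu(t)$ with $\mu(t) = \frac{\delta l}{\delta\xi}(\xi(t))$, $g(t)$ solves $\dot g = g\xi$, $g(0)=e$, and $\mathcal{K} : \mathcal{C} \to \mathfrak{g}^{**}$ is $G$-equivariant, then $I(t) = \langle \mathcal{K}(g(t)^{-1}c_0), \mu(t)\rangle$ is constant in $t$. -/

import Mathlib

open Matrix

attribute [local instance] Matrix.normedAddCommGroup Matrix.normedSpace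

variable {n : ℕ}

/-- Conjugation `η ↦ u η u⁻¹` (the adjoint action `Ad_u`) as a continuous linear map. -/
noncomputable def AdCLM (u : (Matrix (Fin n) (Fin n) ℝ)ˣ) :
    Matrix (Fin n) (Fin n) ℝ →L[ℝ] Matrix (Fin n) (Fin n) ℝ :=
  LinearMap.toContinuousLinearMap
    ((LinearMap.mulRight ℝ (↑u⁻¹ : Matrix (Fin n) (Fin n) ℝ)).comp
      (LinearMap.mulLeft ℝ (↑u : Matrix (Fin n) (Fin n) ℝ)))

/-- Matrix multiplication as a continuous bilinear map (via finite dimensionality). -/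
noncomputable def mulCLM (n : ℕ) :
    Matrix (Fin n) (Fin n) ℝ →L[ℝ] Matrix (Fin n) (Fin n) ℝ →L[ℝ] Matrix (Fin n) (Fin n) ℝ :=
  LinearMap.toContinuousLinearMap
    ((LinearMap.toContinuousLinearMap :
        (Matrix (Fin n) (Fin n) ℝ →ₗ[ℝ] Matrix (Fin n) (Fin n) ℝ) ≃ₗ[ℝ]
          (Matrix (Fin n) (Fin n) ℝ →L[ℝ] Matrix (Fin n) (Fin n) ℝ)).toLinearMap ∘ₗ
      LinearMap.mul ℝ (Matrix (Fin n) (Fin n) ℝ))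

@[simp] lemma mulCLM_apply {n : ℕ} (a b : Matrix (Fin n) (Fin n) ℝ) :
    mulCLM n a b = a * b := rfl

/-- Product rule for matrix-valued curves. -/
theorem HasDerivAt.matMul {n : ℕ} {f g : ℝ → Matrix (Fin n) (Fin n) ℝ}
    {f' g' : Matrix (Fin n) (Fin n) ℝ} {t : ℝ}
    (hf : HasDerivAt f f' t) (hg : HasDerivAt g g' t) :
    HasDerivAt (fun s => f s * g s) (f' * g t + f t * g') t := by
  letI : NormedRing (Matrix (Fin n) (Fin n) ℝ) := Matrix.linftyOpNormedRing
  letI : NormedAlgebra ℝ (Matrix (Fin n) (Fin n) ℝ) := Matrix.linftyOpNormedAlgebra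
  exact HasDerivAt.mul (c := f) (d := g) hf hg

/- Corollary of the Kelvin–Noether theorem for the pure Euler–Poincaré equations:
the quantity `I(t) = ⟨𝒦(g(t)⁻¹ c₀), μ(t)⟩` is conserved. -/
theorem kelvin_noether_pure
    {C : Type*} [MulAction (Matrix (Fin n) (Fin n) ℝ)ˣ C]
    (l : Matrix (Fin n) (Fin n) ℝ → ℝ) (hl : ContDiff ℝ (⊤ : ℕ∞) l)
    (ξ : ℝ → Matrix (Fin n) (Fin n) ℝ) (hξ : ContDiff ℝ (⊤ : ℕ∞) ξ)
    (μ : ℝ → (Matrix (Fin n) (Fin n) ℝ →L[ℝ] ℝ))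
    (hμ : ∀ t, μ t = fderiv ℝ l (ξ t))
    -- the pure Euler–Poincaré equation:  dμ/dt = ad⁎_ξ μ
    (hEP : ∀ (η : Matrix (Fin n) (Fin n) ℝ) (t : ℝ),
      HasDerivAt (fun s => μ s η) (μ t ⁅ξ t, η⁆) t)
    -- reconstruction:  g' = g ξ,  g(0) = e
    (g : ℝ → Matrix (Fin n) (Fin n) ℝ)
    (hg : ∀ t : ℝ, HasDerivAt g (g t * ξ t) t) (hg0 : g 0 = 1)
    (hu : ∀ t, IsUnit (g t))
    -- the equivariant map 𝒦 : C → 𝔤**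
    (K : C → ((Matrix (Fin n) (Fin n) ℝ →L[ℝ] ℝ) →ₗ[ℝ] ℝ))
    (hK : ∀ (u : (Matrix (Fin n) (Fin n) ℝ)ˣ) (c : C)
        (ν : Matrix (Fin n) (Fin n) ℝ →L[ℝ] ℝ),
      K (u • c) ν = K c (ν.comp (AdCLM u)))
    (c₀ : C) :
    ∀ t s : ℝ,
      K (((hu t).unit)⁻¹ • c₀) (μ t) = K (((hu s).unit)⁻¹ • c₀) (μ s) := by
  -- the matrix inverse curve
  set h : ℝ → Matrix (Fin n) (Fin n) ℝ := fun t => Ring.inverse (g t) with hh_def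
  have hcoe : ∀ t, (↑((hu t).unit)⁻¹ : Matrix (Fin n) (Fin n) ℝ) = h t := by
    intro t
    have h0 := Ring.inverse_unit (hu t).unit
    rw [(hu t).unit_spec] at h0
    exact h0.symm
  have hhg : ∀ t, h t * g t = 1 := fun t => Ring.inverse_mul_cancel _ (hu t)
  have hgh : ∀ t, g t * h t = 1 := fun t => Ring.mul_inverse_cancel _ (hu t)
  -- continuity of the inverse curve
  have hdet : ∀ t, IsUnit (g t).det := fun t => (Matrix.isUnit_iff_isUnit_det _).mp (hu t)
  have hhc : ∀ t, ContinuousAt h t := by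
    intro t
    have hinv : ContinuousAt Inv.inv (g t) := by
      refine continuousAt_matrix_inv _ ?_
      rw [Ring.inverse_eq_inv']
      exact continuousAt_inv₀ (hdet t).ne_zero
    have := hinv.comp (hg t).continuousAt
    refine this.congr (Filter.Eventually.of_forall fun s => ?_)
    simp only [hh_def, Function.comp_apply, Matrix.nonsing_inv_eq_ringInverse]
  -- derivative of the inverse curve, via slopes
  have hh' : ∀ t, HasDerivAt h (-(ξ t * h t)) t := by
    intro t
    refine hasDerivAt_iff_tendsto_slope.mpr ?_
    have hEq : ∀ s, -(h s * slope g t s * h t) = slope h t s := by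
      intro s
      rw [slope_def_module, slope_def_module]
      have key : h s - h t = h s * (g t - g s) * h t := by
        rw [mul_sub, sub_mul, mul_assoc (h s) (g t) (h t), hgh t, mul_one, hhg s, one_mul]
      rw [key, mul_smul_comm, smul_mul_assoc, ← smul_neg]
      congr 1
      noncomm_ring
    have hgslope : Filter.Tendsto (slope g t) (nhdsWithin t {t}ᶜ) (nhds (g t * ξ t)) :=
      hasDerivAt_iff_tendsto_slope.mp (hg t)
    have hhten : Filter.Tendsto h (nhdsWithin t {t}ᶜ) (nhds (h t)) :=
      ((hhc t).tendsto).mono_left nhdsWithin_le_nhds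
    have hlim : Filter.Tendsto (fun s => -(h s * slope g t s * h t)) (nhdsWithin t {t}ᶜ)
        (nhds (-(h t * (g t * ξ t) * h t))) :=
      ((hhten.mul hgslope).mul tendsto_const_nhds).neg
    have e : h t * (g t * ξ t) * h t = ξ t * h t := by
      rw [← mul_assoc, hhg t, one_mul]
    rw [e] at hlim
    exact hlim.congr hEq
  -- μ is differentiable as a curve in the dual space
  letI : NormedAddCommGroup (Matrix (Fin n) (Fin n) ℝ →L[ℝ] ℝ) :=
    ContinuousLinearMap.toNormedAddCommGroup
  letI : NormedSpace ℝ (Matrix (Fin n) (Fin n) ℝ →L[ℝ] ℝ) := ContinuousLinearMap.toNormedSpace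
  have hμd : Differentiable ℝ μ := by
    have hμfun : μ = fun t => fderiv ℝ l (ξ t) := funext hμ
    rw [hμfun]
    exact ((hl.fderiv_right (by simp)).comp hξ).differentiable (by simp)
  have hμder : ∀ t, HasDerivAt μ (deriv μ t) t := fun t => (hμd t).hasDerivAt
  -- identify the derivative of μ applied to a fixed vector
  have huniq : ∀ (η : Matrix (Fin n) (Fin n) ℝ) (t : ℝ),
      deriv μ t η = μ t ⁅ξ t, η⁆ := by
    intro η t
    have h1 : HasDerivAt (fun s => μ s η) (deriv μ t η) t := by
      have := (hμder t).clm_apply (hasDerivAt_const t η)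
      exact this.congr_deriv (add_eq_left.mpr (map_zero _))
    exact h1.unique (hEP η t)
  -- the key conserved pairing, pointwise in η
  have key : ∀ (η : Matrix (Fin n) (Fin n) ℝ) (t s : ℝ),
      μ t (h t * η * g t) = μ s (h s * η * g s) := by
    intro η
    have hF' : ∀ t, HasDerivAt (fun s => μ s (h s * η * g s)) 0 t := by
      intro t
      have hA : HasDerivAt (fun s => h s * η * g s)
          ((-(ξ t * h t) * η + h t * 0) * (g t) + (h t * η) * (g t * ξ t)) t :=
        ((hh' t).matMul (hasDerivAt_const t η)).matMul (hg t)
      have H := (hμder t).clm_apply hA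
      have e1 : deriv μ t (h t * η * g t)
          = μ t (ξ t * (h t * η * g t) - (h t * η * g t) * ξ t) := by
        rw [huniq]; rw [Ring.lie_def]
      erw [e1] at H
      have hz : (ξ t * (h t * η * g t) - (h t * η * g t) * ξ t)
          + ((-(ξ t * h t) * η + h t * 0) * (g t) + (h t * η) * (g t * ξ t)) = 0 := by
        noncomm_ring
      exact H.congr_deriv ((map_add (μ t) _ _).symm.trans ((congrArg (μ t) hz).trans (map_zero _)))
    intro t s
    exact is_const_of_deriv_eq_zero
      (fun x => (hF' x).differentiableAt)
      (fun x => (hF' x).deriv) t s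
  intro t s
  rw [hK, hK]
  congr 1
  ext η
  simp only [ContinuousLinearMap.comp_apply, AdCLM,
    LinearMap.coe_toContinuousLinearMap', LinearMap.coe_comp, Function.comp_apply,
    LinearMap.mulLeft_apply, LinearMap.mulRight_apply, inv_inv]
  rw [hcoe t, hcoe s, (hu t).unit_spec, (hu s).unit_spec]
  exact key η t s
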